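/- For the expression E(a,b) defined as a positive multiple of 48D - c₁ - c₂ - c₃ where c₁ = 2((1-a)²+b²)/b, c₂ = 2(a²+b²)/b, c₃ = 2/b, and D = c₁c₂c₃/16 - 41(c₁+c₂+c₃)/1080 - (1/c₁+1/c₂+1/c₃)/5, the identity (45b³/4)·E = 108(a(1-a)-b²)²(1+(1-2a)²+4b²)/(c₁c₂) + 270a²(1-a)² + b²(47a(1-a) + 88(1-2a)² + (1-100b²)) + 81b⁴ holds, and consequently E > 0 for 0 ≤ a ≤ 1/2 and 0 < b ≤ 1/10. -/
import Mathlib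

set_option maxHeartbeats 2000000


theorem E_identity_and_pos (a b c₁ c₂ c₃ D E : ℝ)
    (ha0 : 0 ≤ a) (ha : a ≤ 1/2) (hb0 : 0 < b) (hb : b ≤ 1/10)
    (hc1 : c₁ = 2*((1 - a)^2 + b^2)/b) (hc2 : c₂ = 2*(a^2 + b^2)/b) (hc3 : c₃ = 2/b)
    (hD : D = c₁*c₂*c₃/16 - 41*(c₁ + c₂ + c₃)/1080 - (1/c₁ + 1/c₂ + 1/c₃)/5)
    (hE : E = 48*D - c₁ - c₂ - c₃) :
    45*b^3/4 * E
      = 108*(a*(1 - a) - b^2)^2*(1 + (1 - 2*a)^2 + 4*b^2)/(c₁*c₂)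
        + 270*a^2*(1 - a)^2
        + b^2*(47*a*(1 - a) + 88*(1 - 2*a)^2 + (1 - 100*b^2)) + 81*b^4 ∧
    0 < E := by
  have hbne : b ≠ 0 := ne_of_gt hb0
  have ha1 : a < 1 := by linarith
  have h1 : 0 < (1 - a)^2 + b^2 := by positivity
  have h2 : 0 < a^2 + b^2 := by positivity
  have hc1p : 0 < c₁ := by rw [hc1]; positivity
  have hc2p : 0 < c₂ := by rw [hc2]; positivity
  have key : 45*b^3/4 * E
      = 108*(a*(1 - a) - b^2)^2*(1 + (1 - 2*a)^2 + 4*b^2)/(c₁*c₂)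
        + 270*a^2*(1 - a)^2
        + b^2*(47*a*(1 - a) + 88*(1 - 2*a)^2 + (1 - 100*b^2)) + 81*b^4 := by
    subst hE hD hc1 hc2 hc3
    field_simp
    ring
  refine ⟨key, ?_⟩
  have t1 : 0 ≤ 108*(a*(1 - a) - b^2)^2*(1 + (1 - 2*a)^2 + 4*b^2)/(c₁*c₂) :=
    div_nonneg (by positivity) (mul_pos hc1p hc2p).le
  have t3 : 0 ≤ b^2*(47*a*(1 - a) + 88*(1 - 2*a)^2 + (1 - 100*b^2)) := by
    apply mul_nonneg (by positivity)
    nlinarith [sq_nonneg (1 - 2*a), mul_nonneg ha0 (by linarith : (0:ℝ) ≤ 1 - a)]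
  have hR : 0 < 45*b^3/4 * E := by
    rw [key]
    have : 0 < 81*b^4 := by positivity
    nlinarith [sq_nonneg (a*(1-a))]
  have hb3 : 0 < 45*b^3/4 := by positivity
  nlinarith [hR, hb3]
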